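/- arXiv:1802.04241 — 4 statements merged into one kernel-verified Lean document; each statement's English description precedes it below -/
import Mathlib

section
/- For all n \ge 0, E_{2n} = (-1)^n (2n)! \Delta_n, where \Delta_n is the determinant of the n \times n matrix M with entries M_{ij} = 1/(2(i-j+1))! if i+1 \ge j (interpreting 1/0! = 1 on the superdiagonal where j = i+1), M_{ij} = 0 if j > i+1; i.e., the lower Hessenberg matrix whose (i,j) entry is 1/(2(i-j+1))! for j \le i+1 and 0 otherwise, with 1's on the superdiagonal. -/
/-- Determinant of the `n × n` lower Hessenberg matrix with `(i,j)` entry `1` if `j = i+1`,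
`0` if `j > i+1`, and `f (i-j)` if `j ≤ i` (so the subdiagonal entries are `f 0 = f(i-i)`, etc.;
with `f k = 1/(2k+2)!` this is `1/(2(i-j)+2)!`). -/
noncomputable def hessDet {K : Type*} [Field K] (f : ℕ → K) (n : ℕ) : K :=
  Matrix.det (Matrix.of fun i j : Fin n =>
    if (j : ℕ) = (i : ℕ) + 1 then 1
    else if (i : ℕ) + 1 < (j : ℕ) then 0
    else f ((i : ℕ) - (j : ℕ)))

/-- The power series `cosh x = ∑ x^{2n}/(2n)!` in `ℚ[[x]]`. -/
noncomputable def coshS : PowerSeries ℚ :=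
  PowerSeries.mk fun m => if m % 2 = 0 then ((m.factorial : ℚ))⁻¹ else 0

/-!
Expanding a lower Hessenberg determinant with unit superdiagonal along its first row gives
`Δ_{n+1} = ∑_{i+j=n} (-1)^i f_i Δ_j`, which says exactly that `∑ (-1)^n Δ_n y^n` is the
inverse of `1 + ∑ f_k y^{k+1}`. For `f_k = 1/(2k+2)!` that series is `cosh √y`, whose inverse
is also `∑ E_{2n} y^n/(2n)!` (substitute `y = x²` in `sech x · cosh x = 1`); compare
coefficients.
-/

open PowerSeries
open Finset.HasAntidiagonal (antidiagonal mem_antidiagonal)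

section Hessenberg

variable {K : Type*} [Field K]

noncomputable def unitHessenberg (a : ℕ → ℕ → K) (n : ℕ) : Matrix (Fin n) (Fin n) K :=
  Matrix.of fun i j : Fin n =>
    if (j : ℕ) = (i : ℕ) + 1 then 1 else if (i : ℕ) + 1 < (j : ℕ) then 0 else a i j

theorem hessDet_eq_det_unitHessenberg (f : ℕ → K) (n : ℕ) :
    hessDet f n = (unitHessenberg (fun i j => f (i - j)) n).det := rfl

theorem det_unitHessenberg_succ_succ (a : ℕ → ℕ → K) (n : ℕ) :
    (unitHessenberg a (n + 2)).det =
      a 0 0 * (unitHessenberg (fun i j => a (i + 1) (j + 1)) (n + 1)).det -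
        (unitHessenberg (fun i j => a (i + 1) (if j = 0 then 0 else j + 1)) (n + 1)).det := by
  have hminor₀ : (unitHessenberg a (n + 2)).submatrix Fin.succ (Fin.succAbove 0) =
      unitHessenberg (fun i j => a (i + 1) (j + 1)) (n + 1) := by
    ext i j
    simp [unitHessenberg]
  have hminor₁ : (unitHessenberg a (n + 2)).submatrix Fin.succ (Fin.succAbove 1) =
      unitHessenberg (fun i j => a (i + 1) (if j = 0 then 0 else j + 1)) (n + 1) := by
    ext i j
    cases j using Fin.cases <;> simp [unitHessenberg]
  rw [Matrix.det_succ_row_zero, Fin.sum_univ_succ, Fin.sum_univ_succ, Fin.succ_zero_eq_one,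
    hminor₀, hminor₁]
  simp [unitHessenberg]
  ring

theorem det_unitHessenberg_firstCol (f g : ℕ → K) (n : ℕ) :
    (unitHessenberg (fun i j => if j = 0 then g i else f (i - j)) (n + 1)).det =
      ∑ p ∈ antidiagonal n, (-1) ^ p.1 * g p.1 * hessDet f p.2 := by
  induction n generalizing g with
  | zero => simp [unitHessenberg, hessDet]
  | succ n ih =>
    rw [det_unitHessenberg_succ_succ, Finset.Nat.sum_antidiagonal_succ]
    have hentries₀ : (fun i j => if j + 1 = 0 then g (i + 1) else f (i + 1 - (j + 1))) =
        fun i j => f (i - j) := by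
      funext i j
      simp
    have hentries₁ : (fun i j => if (if j = 0 then 0 else j + 1) = 0 then g (i + 1)
        else f (i + 1 - if j = 0 then 0 else j + 1)) =
        fun i j => if j = 0 then g (i + 1) else f (i - j) := by
      funext i j
      split_ifs <;> simp_all
    simp only [hentries₀, hentries₁, ih, ← hessDet_eq_det_unitHessenberg]
    simp [pow_succ, Finset.sum_neg_distrib, sub_eq_add_neg]

theorem hessDet_zero (f : ℕ → K) : hessDet f 0 = 1 := Matrix.det_fin_zero

theorem hessDet_succ (f : ℕ → K) (n : ℕ) :
    hessDet f (n + 1) = ∑ p ∈ antidiagonal n, (-1) ^ p.1 * f p.1 * hessDet f p.2 := by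
  rw [hessDet_eq_det_unitHessenberg, ← det_unitHessenberg_firstCol]
  congr
  funext i j
  split_ifs with hj <;> simp [hj]

theorem mk_signed_hessDet_mul_one_add_X_mul (f : ℕ → K) :
    mk (fun n => (-1) ^ n * hessDet f n) * (1 + X * mk f) = 1 := by
  ext (_ | n)
  · simp [hessDet_zero]
  · rw [mul_add, mul_one, mul_left_comm, map_add, coeff_succ_X_mul, coeff_mul,
      coeff_mk, hessDet_succ, ← Finset.Nat.sum_antidiagonal_swap, Finset.mul_sum,
      ← Finset.sum_add_distrib]
    simp only [coeff_one, coeff_mk, Prod.fst_swap, Prod.snd_swap, Nat.succ_ne_zero, if_false]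
    refine Finset.sum_eq_zero fun p hp => ?_
    obtain rfl : p.1 + p.2 = n := mem_antidiagonal.mp hp
    have hsign : (-1 : K) ^ (p.1 + p.2 + 1) * (-1) ^ p.2 = -(-1) ^ p.1 := by
      rw [← pow_add, show p.1 + p.2 + 1 + p.2 = p.1 + 1 + 2 * p.2 by ring, pow_add, pow_mul]
      simp [pow_succ]
    linear_combination f p.2 * hessDet f p.1 * hsign

end Hessenberg

namespace PowerSeries

variable {R : Type*} [CommRing R]

theorem expand_injective {p : ℕ} (hp : p ≠ 0) : Function.Injective (expand p hp (R := R)) :=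
  fun φ ψ h => by
    ext n
    rw [← coeff_expand_mul p hp φ, h, coeff_expand_mul]

theorem mk_even_eq_expand (a : ℕ → R) :
    mk (fun m => if m % 2 = 0 then a m else 0) = expand 2 two_ne_zero (mk fun k => a (2 * k)) := by
  ext m
  rw [coeff_mk, coeff_expand]
  by_cases h : m % 2 = 0
  · rw [if_pos h, if_pos (Nat.dvd_of_mod_eq_zero h), coeff_mk,
      Nat.mul_div_cancel' (Nat.dvd_of_mod_eq_zero h)]
  · rw [if_neg h, if_neg (mt Nat.mod_eq_zero_of_dvd h)]

end PowerSeries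

/-- If `E : ℕ → ℚ` satisfies `(∑ E_{2n} x^{2n}/(2n)!) * cosh x = 1` (i.e. the `E_{2n}` are the
secant numbers), then `E_{2n} = (-1)^n (2n)! Δ_n` where `Δ_n` is the Hessenberg determinant with
entries `1/(2(i-j)+2)!` for `j ≤ i`, `1` on the superdiagonal, and `0` above it. -/
theorem stmt3 (E : ℕ → ℚ)
    (hE : (PowerSeries.mk fun m => if m % 2 = 0 then E m / (m.factorial : ℚ) else 0) * coshS = 1)
    (n : ℕ) :
    E (2 * n) = (-1) ^ n * ((2 * n).factorial : ℚ) *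
      hessDet (fun k => (((2 * k + 2).factorial : ℚ))⁻¹) n := by
  set F : ℕ → ℚ := fun k => ((2 * k + 2).factorial : ℚ)⁻¹
  have hcosh : coshS = expand 2 two_ne_zero (1 + X * mk F) := by
    rw [coshS, mk_even_eq_expand]
    congr 1
    ext (_ | k) <;> simp [F, coeff_succ_X_mul, Nat.mul_succ]
  have hsec : mk (fun k => E (2 * k) / (2 * k).factorial) * (1 + X * mk F) = 1 := by
    apply expand_injective two_ne_zero
    rw [map_mul, map_one, ← hcosh, ← hE, mk_even_eq_expand]
  have hseries := left_inv_eq_right_inv hsec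
    (by rw [mul_comm]; exact mk_signed_hessDet_mul_one_add_X_mul F)
  have hcoeff := congrArg (coeff n) hseries
  rw [coeff_mk, coeff_mk, div_eq_iff (by positivity)] at hcoeff
  rw [hcoeff]
  ring
end

section
/- For all \gamma \in D_k (derangements of [k]) and all n \ge k, \sum_{\sigma \in S_n, dp(\sigma) = \gamma} q^{maj(\sigma)} = q^{maj(\gamma)} \binom{n}{k}_q, where \binom{n}{k}_q is the Gaussian binomial coefficient. -/
/-!
A permutation `σ` with `dp σ = γ` is `γ` placed on its set `S` of non-fixed points along the
increasing enumeration of `S`, so the sum runs over the `k`-subsets `S` of `[n]`. Whether `σ` has a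
descent at `p` depends only on which of `p, p + 1` lie in `S` and on their ranks `r` in `S`: two
consecutive elements of `S` give a descent iff `γ` has one at `r`; an element of `S` followed by a
fixed point gives one iff `r` is an excedance of `γ`, and a fixed point followed by an element of
`S` iff `r` is not (as `γ` has no fixed points). Splitting the sum according to whether the last
position lies in `S` gives two sums satisfying `q`-Pascal recurrences in `n`; they close up because
at consecutive positions `r, r + 1` of which exactly one is an excedance, `γ` has a descent at `r`
iff `r` is the excedance.
-/

/-- The major index of a permutation of `Fin n`: the sum of the (1-indexed) descent
positions `i ∈ [n-1]` with `σ(i) > σ(i+1)`. -/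
def maj {n : ℕ} (σ : Equiv.Perm (Fin n)) : ℕ :=
  ∑ i ∈ Finset.range n,
    if h : i + 1 < n then
      (if σ ⟨i + 1, h⟩ < σ ⟨i, Nat.lt_of_succ_lt h⟩ then i + 1 else 0)
    else 0

/-- The `q`-integer, `q`-factorial and Gaussian binomial coefficient. -/
noncomputable def qInt {K : Type*} [Field K] (q : K) (m : ℕ) : K :=
  ∑ i ∈ Finset.range m, q ^ i

noncomputable def qFact {K : Type*} [Field K] (q : K) : ℕ → K
  | 0 => 1
  | m + 1 => qFact q m * qInt q (m + 1)

noncomputable def qBinom {K : Type*} [Field K] (q : K) (n k : ℕ) : K :=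
  qFact q n / (qFact q k * qFact q (n - k))

/-- The set of non-fixed points of `σ`. -/
def nonfixed {n : ℕ} (σ : Equiv.Perm (Fin n)) : Finset (Fin n) :=
  Finset.univ.filter fun i : Fin n => σ i ≠ i

/-- The derangement part `dp σ`: the reduction of `σ` along its set of non-fixed points,
a permutation of `Fin (nonfixed σ).card` obtained by transporting the restriction of `σ`
to its non-fixed points along the order isomorphism enumerating them increasingly. -/
def dp {n : ℕ} (σ : Equiv.Perm (Fin n)) : Equiv.Perm (Fin (nonfixed σ).card) :=
  (((nonfixed σ).orderIsoOfFin rfl).toEquiv.symm.permCongr)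
    (σ.subtypePerm (by
      intro x
      simp [nonfixed, not_iff_not, Equiv.apply_eq_iff_eq]))

open Finset

section QBinomial

variable {K : Type*} [Field K]

lemma qInt_add (q : K) (a b : ℕ) : qInt q (a + b) = qInt q a + q ^ a * qInt q b := by
  simp only [qInt, sum_range_add, mul_sum, pow_add]

lemma qFact_succ (q : K) (m : ℕ) : qFact q (m + 1) = qFact q m * qInt q (m + 1) := rfl

variable {q : K}

lemma qFact_ne_zero (hq : ∀ m, qInt q (m + 1) ≠ 0) (m : ℕ) : qFact q m ≠ 0 := by
  induction m with
  | zero => exact one_ne_zero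
  | succ m ih => exact mul_ne_zero ih (hq m)

/-- `qBinom q n k` is not `0` for `n < k`; `qChoose` is, like `Nat.choose`. -/
noncomputable def qChoose (q : K) (n k : ℕ) : K := if k ≤ n then qBinom q n k else 0

lemma qChoose_of_le {n k : ℕ} (h : k ≤ n) : qChoose q n k = qBinom q n k := if_pos h

lemma qChoose_of_lt {n k : ℕ} (h : n < k) : qChoose q n k = 0 := if_neg (by omega)

lemma qChoose_zero_right (hq : ∀ m, qInt q (m + 1) ≠ 0) (n : ℕ) : qChoose q n 0 = 1 := by
  simp [qChoose, qBinom, qFact, qFact_ne_zero hq]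

lemma qChoose_self (hq : ∀ m, qInt q (m + 1) ≠ 0) (n : ℕ) : qChoose q n n = 1 := by
  simp [qChoose, qBinom, qFact, qFact_ne_zero hq]

/-- Both `q`-Pascal rules follow from this one by splitting `[j + s + 2]_q` in either order. -/
lemma qChoose_succ_succ_of_qInt_eq (hq : ∀ m, qInt q (m + 1) ≠ 0) {j s x y : ℕ}
    (hsplit : qInt q (j + s + 2) = q ^ x * qInt q (s + 1) + q ^ y * qInt q (j + 1)) :
    qChoose q (j + (s + 1) + 1) (j + 1) =
      q ^ x * qChoose q (j + (s + 1)) (j + 1) + q ^ y * qChoose q (j + (s + 1)) j := by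
  rw [qChoose_of_le (by omega), qChoose_of_le (by omega), qChoose_of_le (by omega)]
  simp only [qBinom, show j + (s + 1) + 1 - (j + 1) = s + 1 by omega,
    show j + (s + 1) - (j + 1) = s by omega, show j + (s + 1) - j = s + 1 by omega]
  rw [show j + (s + 1) + 1 = j + s + 2 by omega, show j + (s + 1) = j + s + 1 by omega,
    qFact_succ q (j + s + 1), hsplit, qFact_succ q s, qFact_succ q j]
  field_simp [hq s, hq j, qFact_ne_zero hq]

lemma qChoose_pascal (hq : ∀ m, qInt q (m + 1) ≠ 0) (j r : ℕ) :
    qChoose q (j + r + 1) (j + 1) = qChoose q (j + r) (j + 1) + q ^ r * qChoose q (j + r) j := by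
  rcases r with _ | s
  · simp [qChoose_of_lt, qChoose_self hq]
  · simpa using qChoose_succ_succ_of_qInt_eq (x := 0) (y := s + 1) hq
      (by rw [show j + s + 2 = (s + 1) + (j + 1) by omega, qInt_add]; ring)

lemma qChoose_pascal' (hq : ∀ m, qInt q (m + 1) ≠ 0) (j r : ℕ) :
    qChoose q (j + r + 1) (j + 1) =
      q ^ (j + 1) * qChoose q (j + r) (j + 1) + qChoose q (j + r) j := by
  rcases r with _ | s
  · simp [qChoose_of_lt, qChoose_self hq]
  · simpa using qChoose_succ_succ_of_qInt_eq (x := j + 1) (y := 0) hq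
      (by rw [show j + s + 2 = (j + 1) + (s + 1) by omega, qInt_add]; ring)

end QBinomial

lemma qInt_X_ne_zero (m : ℕ) : qInt (RatFunc.X : RatFunc ℚ) (m + 1) ≠ 0 := by
  have : qInt (RatFunc.X : RatFunc ℚ) (m + 1) =
      algebraMap (Polynomial ℚ) (RatFunc ℚ) (∑ i ∈ range (m + 1), Polynomial.X ^ i) := by
    simp [qInt, map_sum]
  rw [this]
  exact RatFunc.algebraMap_ne_zero fun h =>
    Nat.cast_add_one_ne_zero m (by simpa using congrArg (Polynomial.eval 1) h)

section Pattern

variable (a D : ℕ → Bool)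

def rank (T : Finset ℕ) (p : ℕ) : ℕ := #{x ∈ T | x ≤ p}

/-- `T` stands for the set of non-fixed points of a permutation obtained by placing a derangement
on it; `a r` and `D r` say that the `r`-th element of `T` (`1`-based, as counted by `rank`) is an
excedance, resp. is followed by a descent, of that derangement. -/
def patternDescent (T : Finset ℕ) (p : ℕ) : Bool :=
  if p ∈ T then (if p + 1 ∈ T then D (rank T p) else a (rank T p))
  else (if p + 1 ∈ T then !a (rank T (p + 1)) else false)

def patternMaj (n : ℕ) (T : Finset ℕ) : ℕ :=
  ∑ p ∈ range (n - 1), if patternDescent a D T p then p + 1 else 0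

def descentSum (k : ℕ) : ℕ := ∑ j ∈ range k, if D j then j else 0

def Compatible (k : ℕ) : Prop :=
  ∀ j, j + 1 < k → a (j + 1) ≠ a (j + 2) → D (j + 1) = a (j + 1)

variable {a D}

lemma rank_insert_of_lt {T : Finset ℕ} {x p : ℕ} (h : p < x) : rank (insert x T) p = rank T p := by
  simp [rank, filter_insert, not_le.2 h]

lemma rank_insert_self {S : Finset ℕ} {p : ℕ} (h : S ⊆ range p) : rank (insert p S) p = #S + 1 := by
  have hp : p ∉ S := fun hp => by simpa using h hp
  rw [rank, filter_insert, if_pos le_rfl, card_insert_of_notMem (by simp [hp]),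
    filter_true_of_mem fun x hx => (mem_range.1 (h hx)).le]

lemma patternDescent_insert_of_lt {T : Finset ℕ} {x p : ℕ} (h : p + 1 < x) :
    patternDescent a D (insert x T) p = patternDescent a D T p := by
  have hp : p ≠ x := by omega
  have hp1 : p + 1 ≠ x := by omega
  simp [patternDescent, rank_insert_of_lt (show p < x by omega), rank_insert_of_lt h, hp, hp1]

lemma patternDescent_of_subset_range {S : Finset ℕ} {m : ℕ} (h : S ⊆ range m) :
    patternDescent a D S m = false := by
  have hm : m ∉ S := fun hm => by simpa using h hm
  have hm1 : m + 1 ∉ S := fun hm => by simpa using h hm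
  simp [patternDescent, hm, hm1]

lemma patternDescent_insert_self {S : Finset ℕ} {m : ℕ} (h : S ⊆ range m) :
    patternDescent a D (insert m S) m = a (#S + 1) := by
  have hm1 : m + 1 ∉ S := fun hm => by simpa using h hm
  simp [patternDescent, hm1, rank_insert_self h]

lemma patternDescent_insert_succ {S : Finset ℕ} {m : ℕ} (h : S ⊆ range m) :
    patternDescent a D (insert (m + 1) S) m = !a (#S + 1) := by
  have hm : m ∉ S := fun hm => by simpa using h hm
  simp [patternDescent, hm,
    rank_insert_self (h.trans (range_subset_range.2 m.le_succ))]

lemma patternDescent_insert_succ_insert_self {S : Finset ℕ} {m : ℕ} (h : S ⊆ range m) :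
    patternDescent a D (insert (m + 1) (insert m S)) m = D (#S + 1) := by
  simp [patternDescent, rank_insert_of_lt (Nat.lt_succ_self m), rank_insert_self h]

lemma patternMaj_succ_succ (m : ℕ) (T : Finset ℕ) :
    patternMaj a D (m + 2) T =
      patternMaj a D (m + 1) T + if patternDescent a D T m then m + 1 else 0 := by
  simp [patternMaj, sum_range_succ]

lemma patternMaj_insert_of_le {T : Finset ℕ} {n x : ℕ} (h : n ≤ x) :
    patternMaj a D n (insert x T) = patternMaj a D n T :=
  sum_congr rfl fun p hp => by
    rw [patternDescent_insert_of_lt (by have := mem_range.1 hp; omega)]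

lemma patternMaj_empty (n : ℕ) : patternMaj a D n ∅ = 0 := by
  simp [patternMaj, patternDescent]

lemma descentSum_succ (k : ℕ) :
    descentSum D (k + 1) = descentSum D k + if D k then k else 0 :=
  sum_range_succ _ _

end Pattern

lemma sum_powersetCard_range_succ {β : Type*} [AddCommMonoid β] (m j : ℕ) (f : Finset ℕ → β) :
    ∑ S ∈ (range (m + 1)).powersetCard (j + 1), f S =
      ∑ S ∈ (range m).powersetCard (j + 1), f S +
        ∑ S ∈ (range m).powersetCard j, f (insert m S) := by
  have hm : ∀ S ∈ (range m).powersetCard j, m ∉ S := fun S hS hm => by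
    simpa using (mem_powersetCard.1 hS).1 hm
  rw [range_add_one, powersetCard_succ_insert (by simp), sum_union, sum_image]
  · intro S hS S' hS' h
    rw [← erase_insert (hm S hS), ← erase_insert (hm S' hS'), h]
  · refine disjoint_left.2 fun S hS hS' => ?_
    obtain ⟨S', -, rfl⟩ := mem_image.1 hS'
    simpa using (mem_powersetCard.1 hS).1 (mem_insert_self m S')

section PatternSums

variable {R : Type*} [CommSemiring R] (q : R) (a D : ℕ → Bool)

/-- The sum over the `T ⊆ range (m + 1)` with `m ∉ T` and `#T = j`; `sumLastIn` sums over those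
with `m ∈ T` and `#T = j + 1`. -/
def sumLastOut (m j : ℕ) : R :=
  ∑ S ∈ (range m).powersetCard j, q ^ patternMaj a D (m + 1) S

def sumLastIn (m j : ℕ) : R :=
  ∑ S ∈ (range m).powersetCard j, q ^ patternMaj a D (m + 1) (insert m S)

lemma sumLastOut_zero_right (m : ℕ) : sumLastOut q a D m 0 = 1 := by
  simp [sumLastOut, patternMaj_empty]

lemma sumLastIn_zero_zero : sumLastIn q a D 0 0 = 1 := by
  simp [sumLastIn, patternMaj]

lemma sumLastOut_of_lt {m j : ℕ} (h : m < j) : sumLastOut q a D m j = 0 := by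
  simp [sumLastOut, powersetCard_eq_empty.2 (by rwa [card_range])]

lemma sumLastIn_of_lt {m j : ℕ} (h : m < j) : sumLastIn q a D m j = 0 := by
  simp [sumLastIn, powersetCard_eq_empty.2 (by rwa [card_range])]

lemma sumLastOut_succ_succ (m j : ℕ) :
    sumLastOut q a D (m + 1) (j + 1) =
      sumLastOut q a D m (j + 1) + q ^ (if a (j + 1) then m + 1 else 0) * sumLastIn q a D m j := by
  rw [sumLastOut, sum_powersetCard_range_succ, sumLastOut, sumLastIn, mul_sum]
  congr 1 <;> refine sum_congr rfl fun S hS => ?_ <;>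
    obtain ⟨hSm, hcard⟩ := mem_powersetCard.1 hS
  · simp [patternMaj_succ_succ, patternDescent_of_subset_range hSm]
  · rw [patternMaj_succ_succ, patternDescent_insert_self hSm, hcard, pow_add, mul_comm]

lemma sumLastIn_succ_zero (m : ℕ) :
    sumLastIn q a D (m + 1) 0 = q ^ (if a 1 then 0 else m + 1) := by
  have h := patternDescent_insert_succ (a := a) (D := D) (empty_subset (range m))
  rw [sumLastIn, powersetCard_zero, sum_singleton, patternMaj_succ_succ,
    patternMaj_insert_of_le le_rfl, patternMaj_empty, h, card_empty, zero_add]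
  cases a 1 <;> rfl

lemma sumLastIn_succ_succ (m j : ℕ) :
    sumLastIn q a D (m + 1) (j + 1) =
      q ^ (if a (j + 2) then 0 else m + 1) * sumLastOut q a D m (j + 1) +
        q ^ (if D (j + 1) then m + 1 else 0) * sumLastIn q a D m j := by
  rw [sumLastIn, sum_powersetCard_range_succ, sumLastOut, sumLastIn, mul_sum, mul_sum]
  congr 1 <;> refine sum_congr rfl fun S hS => ?_ <;>
    obtain ⟨hSm, hcard⟩ := mem_powersetCard.1 hS
  · rw [patternMaj_succ_succ, patternDescent_insert_succ hSm, hcard,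
      patternMaj_insert_of_le le_rfl, pow_add, mul_comm]
    cases a (j + 2) <;> rfl
  · rw [patternMaj_succ_succ, patternDescent_insert_succ_insert_self hSm, hcard,
      patternMaj_insert_of_le le_rfl, pow_add, mul_comm]

end PatternSums

section ClosedForms

variable {K : Type*} [Field K] {q : K}

lemma qChoose_pascal_ite (hq : ∀ m, qInt q (m + 1) ≠ 0) (A : Bool) (j r : ℕ) :
    q ^ (if A then j + 1 else 0) * qChoose q (j + r) (j + 1) +
      q ^ (if A then 0 else r) * qChoose q (j + r) j = qChoose q (j + r + 1) (j + 1) := by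
  cases A
  · simp [qChoose_pascal hq]
  · simp [qChoose_pascal' hq]

lemma qChoose_pascal_compatible (hq : ∀ m, qInt q (m + 1) ≠ 0) {A A' E : Bool}
    (hc : A ≠ A' → E = A) (s j r : ℕ) :
    q ^ (if A' then 0 else j + r + 1) *
        (q ^ (s + if A then j + 1 else 0) * qChoose q (j + r) (j + 1)) +
      q ^ (if E then j + r + 1 else 0) *
        (q ^ (s + if A then 0 else r) * qChoose q (j + r) j) =
      q ^ (s + (if E then j + 1 else 0) + if A' then 0 else r) *
        qChoose q (j + r + 1) (j + 1) := by
  cases A <;> cases A' <;> cases E <;>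
    simp only [ne_eq, not_true_eq_false, not_false_eq_true, Bool.false_eq_true, Bool.true_eq_false,
      implies_true, imp_self, imp_false, ↓reduceIte, add_zero, pow_zero, one_mul] at hc ⊢
  all_goals first
    | (rw [qChoose_pascal hq]; ring1)
    | (rw [qChoose_pascal' hq]; ring1)

variable {a D : ℕ → Bool} {k : ℕ}

theorem sumLastOut_eq_and_sumLastIn_eq (hq : ∀ m, qInt q (m + 1) ≠ 0) (hc : Compatible a D k)
    (m : ℕ) :
    (∀ j ≤ k, sumLastOut q a D m j =
      q ^ (descentSum D j + if a j then j else 0) * qChoose q m j) ∧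
    ∀ j < k, sumLastIn q a D m j =
      q ^ (descentSum D (j + 1) + if a (j + 1) then 0 else m - j) * qChoose q m j := by
  induction m with
  | zero =>
    constructor <;> rintro (_ | j) hj
    · simp [sumLastOut_zero_right, qChoose_zero_right hq, descentSum]
    · simp [sumLastOut_of_lt, qChoose_of_lt]
    · simp [sumLastIn_zero_zero, qChoose_zero_right hq, descentSum]
    · simp [sumLastIn_of_lt, qChoose_of_lt]
  | succ m ih =>
    obtain ⟨ihOut, ihIn⟩ := ih
    constructor <;> rintro (_ | j) hj
    · simp [sumLastOut_zero_right, qChoose_zero_right hq, descentSum]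
    · rcases lt_or_ge m j with hmj | hjm
      · have hlt : m + 1 < j + 1 := by omega
        simp [sumLastOut_of_lt _ _ _ hlt, qChoose_of_lt hlt]
      obtain ⟨r, rfl⟩ := Nat.exists_eq_add_of_le hjm
      rw [sumLastOut_succ_succ, ihOut (j + 1) hj, ihIn j (by omega), add_tsub_cancel_left,
        qChoose_pascal hq]
      cases a (j + 1) <;>
        simp only [Bool.false_eq_true, ↓reduceIte, add_zero, pow_zero, one_mul] <;> ring
    · simp [sumLastIn_succ_zero, qChoose_zero_right hq, descentSum]
    · rcases lt_or_ge m j with hmj | hjm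
      · have hlt : m + 1 < j + 1 := by omega
        simp [sumLastIn_of_lt _ _ _ hlt, qChoose_of_lt hlt]
      obtain ⟨r, rfl⟩ := Nat.exists_eq_add_of_le hjm
      rw [sumLastIn_succ_succ, ihOut (j + 1) hj.le, ihIn j (by omega), descentSum_succ (j + 1),
        show j + r + 1 - (j + 1) = r by omega, add_tsub_cancel_left]
      exact qChoose_pascal_compatible hq (hc j hj) _ j r

theorem sum_powersetCard_patternMaj (hq : ∀ m, qInt q (m + 1) ≠ 0) (hc : Compatible a D k)
    {n : ℕ} (hk : k ≤ n) :
    ∑ T ∈ (range n).powersetCard k, q ^ patternMaj a D n T =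
      q ^ descentSum D k * qChoose q n k := by
  rcases k with _ | j
  · simp [qChoose_zero_right hq, descentSum, patternMaj_empty]
  obtain ⟨r, rfl⟩ : ∃ r, n = j + r + 1 := ⟨n - (j + 1), by omega⟩
  rw [sum_powersetCard_range_succ]
  have hOut := (sumLastOut_eq_and_sumLastIn_eq hq hc (j + r)).1 (j + 1) le_rfl
  have hIn := (sumLastOut_eq_and_sumLastIn_eq hq hc (j + r)).2 j (Nat.lt_succ_self j)
  rw [sumLastOut] at hOut
  rw [sumLastIn] at hIn
  rw [hOut, hIn, add_tsub_cancel_left, ← qChoose_pascal_ite hq (a (j + 1)), mul_add, pow_add,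
    pow_add]
  ring

end ClosedForms

section Permutations

variable {n k : ℕ}

/-- `1`-based: `excAt γ (j + 1)` says that `j` is an excedance of `γ`, `desAt γ (j + 1)` that
`γ` has a descent at `j`. -/
def excAt (γ : Equiv.Perm (Fin k)) : ℕ → Bool
  | 0 => false
  | j + 1 => if h : j < k then decide (⟨j, h⟩ < γ ⟨j, h⟩) else false

def desAt (γ : Equiv.Perm (Fin k)) : ℕ → Bool
  | 0 => false
  | j + 1 => if h : j + 1 < k then decide (γ ⟨j + 1, h⟩ < γ ⟨j, by omega⟩) else false

lemma maj_eq_descentSum (γ : Equiv.Perm (Fin k)) : maj γ = descentSum (desAt γ) k := by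
  set f : ℕ → ℕ := fun j => if desAt γ j then j else 0
  have hmaj : maj γ = ∑ i ∈ range k, f (i + 1) := by
    refine sum_congr rfl fun i _ => ?_
    by_cases hi : i + 1 < k <;> simp [f, desAt, hi]
  have hk : f k = 0 := by
    rcases k with _ | k <;> simp [f, desAt]
  have h0 : f 0 = 0 := by simp [f]
  have h1 := sum_range_succ' f k
  have h2 := sum_range_succ f k
  change maj γ = ∑ j ∈ range k, f j
  omega

lemma compatible_excAt_desAt {γ : Equiv.Perm (Fin k)} (hγ : ∀ i, γ i ≠ i) :
    Compatible (excAt γ) (desAt γ) k := by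
  intro j hj hne
  have hx := Fin.val_ne_of_ne (hγ ⟨j, by omega⟩)
  have hy := Fin.val_ne_of_ne (hγ ⟨j + 1, hj⟩)
  have hxy : (γ ⟨j, by omega⟩ : ℕ) ≠ γ ⟨j + 1, hj⟩ :=
    Fin.val_ne_of_ne (γ.injective.ne (by simp))
  simp only [excAt, desAt, dif_pos hj, dif_pos (show j < k by omega), Fin.lt_def, ne_eq,
    decide_eq_decide] at hne ⊢
  omega

lemma Finset.exists_orderEmbOfFin_eq {α : Type*} [LinearOrder α] {S : Finset α} (h : #S = k)
    {x : α} (hx : x ∈ S) : ∃ j, S.orderEmbOfFin h j = x := by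
  rwa [← Set.mem_range, range_orderEmbOfFin, mem_coe]

def placeOn (γ : Equiv.Perm (Fin k)) (S : Finset (Fin n)) : Equiv.Perm (Fin n) :=
  if h : #S = k then γ.extendDomain (S.orderIsoOfFin h).toEquiv else 1

lemma placeOn_apply_orderEmbOfFin (γ : Equiv.Perm (Fin k)) {S : Finset (Fin n)} (h : #S = k)
    (j : Fin k) : placeOn γ S (S.orderEmbOfFin h j) = S.orderEmbOfFin h (γ j) := by
  have hmem := S.orderEmbOfFin_mem h j
  rw [placeOn, dif_pos h, Equiv.Perm.extendDomain_apply_subtype _ _ hmem]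
  have : (S.orderIsoOfFin h).toEquiv.symm ⟨_, hmem⟩ = j := by
    rw [Equiv.symm_apply_eq]
    exact Subtype.ext (S.coe_orderIsoOfFin_apply h j).symm
  rw [this]
  exact S.coe_orderIsoOfFin_apply h (γ j)

lemma placeOn_apply_of_notMem (γ : Equiv.Perm (Fin k)) {S : Finset (Fin n)} {x : Fin n}
    (hx : x ∉ S) : placeOn γ S x = x := by
  unfold placeOn
  split_ifs
  · exact Equiv.Perm.extendDomain_apply_not_subtype _ _ hx
  · rfl

lemma nonfixed_placeOn {γ : Equiv.Perm (Fin k)} (hγ : ∀ i, γ i ≠ i) {S : Finset (Fin n)}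
    (h : #S = k) : nonfixed (placeOn γ S) = S := by
  ext x
  simp only [nonfixed, mem_filter, mem_univ, true_and]
  refine ⟨fun hx => by_contra fun hxS => hx (placeOn_apply_of_notMem γ hxS), fun hx => ?_⟩
  obtain ⟨j, rfl⟩ := exists_orderEmbOfFin_eq h hx
  rw [placeOn_apply_orderEmbOfFin γ h, Ne, (S.orderEmbOfFin h).injective.eq_iff]
  exact hγ j

lemma exists_dp_eq_iff (γ : Equiv.Perm (Fin k)) {σ : Equiv.Perm (Fin n)} {S : Finset (Fin n)}
    (hS : nonfixed σ = S) (h : #S = k) :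
    (∃ h : #(nonfixed σ) = k, (finCongr h).permCongr (dp σ) = γ) ↔
      ∀ j, σ (S.orderEmbOfFin h j) = S.orderEmbOfFin h (γ j) := by
  subst hS
  subst h
  simp only [exists_true_left, Equiv.ext_iff]
  refine forall_congr' fun j => ?_
  simp only [Equiv.permCongr_apply, finCongr_refl, Equiv.refl_symm, Equiv.refl_apply, dp,
    Equiv.symm_symm, Equiv.symm_apply_eq, Subtype.ext_iff, Equiv.Perm.subtypePerm_apply,
    OrderIso.coe_toEquiv, coe_orderIsoOfFin_apply]

lemma eq_placeOn_nonfixed (γ : Equiv.Perm (Fin k)) {σ : Equiv.Perm (Fin n)}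
    (hσ : ∃ h : #(nonfixed σ) = k, (finCongr h).permCongr (dp σ) = γ) :
    placeOn γ (nonfixed σ) = σ := by
  have h := hσ.1
  have key := (exists_dp_eq_iff γ rfl h).1 hσ
  ext1 x
  by_cases hx : x ∈ nonfixed σ
  · obtain ⟨j, rfl⟩ := exists_orderEmbOfFin_eq h hx
    rw [placeOn_apply_orderEmbOfFin, key]
  · rw [placeOn_apply_of_notMem γ hx]
    exact (by simpa [nonfixed] using hx : σ x = x).symm

lemma mem_map_valEmbedding {S : Finset (Fin n)} {p : ℕ} (hp : p < n) :
    p ∈ S.map Fin.valEmbedding ↔ (⟨p, hp⟩ : Fin n) ∈ S := by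
  simp only [mem_map, Fin.valEmbedding_apply]
  exact ⟨fun ⟨x, hx, hxp⟩ => by subst hxp; exact hx, fun hp => ⟨_, hp, rfl⟩⟩

lemma rank_map_orderEmbOfFin (S : Finset (Fin n)) (h : #S = k) (j : Fin k) :
    rank (S.map Fin.valEmbedding) (S.orderEmbOfFin h j) = j + 1 := by
  set e := S.orderEmbOfFin h
  have : {x ∈ S | x ≤ e j} = (Iic j).map e.toEmbedding := by
    ext x
    simp only [mem_filter, mem_map, mem_Iic, RelEmbedding.coe_toEmbedding]
    constructor
    · rintro ⟨hx, hle⟩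
      obtain ⟨i, rfl⟩ := exists_orderEmbOfFin_eq h hx
      exact ⟨i, e.le_iff_le.1 hle, rfl⟩
    · rintro ⟨i, hi, rfl⟩
      exact ⟨S.orderEmbOfFin_mem h i, e.le_iff_le.2 hi⟩
  rw [rank, filter_map, card_map, ← Fin.card_Iic, ← card_map e.toEmbedding, ← this]
  rfl

lemma excAt_succ (γ : Equiv.Perm (Fin k)) (j : Fin k) : excAt γ (j + 1) = decide (j < γ j) := by
  simp [excAt]

lemma desAt_succ (γ : Equiv.Perm (Fin k)) {j j' : Fin k} (h : (j' : ℕ) = j + 1) :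
    desAt γ (j + 1) = decide (γ j' < γ j) := by
  obtain ⟨j', hj'⟩ := j'
  subst h
  simp [desAt, hj']

lemma val_orderEmbOfFin_eq_succ {S : Finset (Fin n)} (h : #S = k) {j j' : Fin k}
    (hjj' : (S.orderEmbOfFin h j' : ℕ) = S.orderEmbOfFin h j + 1) : (j' : ℕ) = j + 1 := by
  set e := S.orderEmbOfFin h
  have hlt : (j : ℕ) < j' := Fin.lt_def.1 (e.lt_iff_lt.1 (Fin.lt_def.2 (by omega)))
  by_contra hne
  have hi : (j : ℕ) + 1 < k := by have := j'.2; omega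
  have h1 := e.lt_iff_lt.2 (show j < ⟨j + 1, hi⟩ from Fin.lt_def.2 (by simp))
  have h2 := e.lt_iff_lt.2 (show (⟨j + 1, hi⟩ : Fin k) < j' from Fin.lt_def.2 (by simp; omega))
  rw [Fin.lt_def] at h1 h2
  omega

lemma placeOn_descent_iff {γ : Equiv.Perm (Fin k)} (hγ : ∀ i, γ i ≠ i) {S : Finset (Fin n)}
    (h : #S = k) {p : ℕ} (hp : p + 1 < n) :
    placeOn γ S ⟨p + 1, hp⟩ < placeOn γ S ⟨p, by omega⟩ ↔
      patternDescent (excAt γ) (desAt γ) (S.map Fin.valEmbedding) p := by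
  have hne : ∀ {x y : Fin n}, x ∈ S → y ∉ S → (x : ℕ) ≠ y := fun hx hy hxy =>
    hy (Fin.ext hxy ▸ hx)
  have hrank : ∀ {j : Fin k} {p : ℕ} (hp : p < n), S.orderEmbOfFin h j = ⟨p, hp⟩ →
      rank (S.map Fin.valEmbedding) p = j + 1 := by
    intro j p hp hj
    simpa [hj] using rank_map_orderEmbOfFin S h j
  simp only [patternDescent, mem_map_valEmbedding (show p < n by omega), mem_map_valEmbedding hp]
  by_cases hx : (⟨p, by omega⟩ : Fin n) ∈ S <;> by_cases hy : (⟨p + 1, hp⟩ : Fin n) ∈ S <;>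
    simp only [hx, hy, if_true, if_false]
  · obtain ⟨j, hj⟩ := exists_orderEmbOfFin_eq h hx
    obtain ⟨j', hj'⟩ := exists_orderEmbOfFin_eq h hy
    have hjj' := val_orderEmbOfFin_eq_succ h (j := j) (j' := j') (by simp [hj, hj'])
    rw [hrank _ hj, ← hj, ← hj', desAt_succ γ hjj', placeOn_apply_orderEmbOfFin,
      placeOn_apply_orderEmbOfFin, (S.orderEmbOfFin h).lt_iff_lt, decide_eq_true_iff]
  · obtain ⟨j, hj⟩ := exists_orderEmbOfFin_eq h hx
    have hγj := hne (S.orderEmbOfFin_mem h (γ j)) hy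
    have key := (S.orderEmbOfFin h).lt_iff_lt (a := j) (b := γ j)
    rw [hrank _ hj, excAt_succ, placeOn_apply_of_notMem γ hy, ← hj, placeOn_apply_orderEmbOfFin,
      decide_eq_true_iff]
    rw [hj] at key
    simp only [Fin.lt_def] at hγj key ⊢
    omega
  · obtain ⟨j, hj⟩ := exists_orderEmbOfFin_eq h hy
    have hγj := hne (S.orderEmbOfFin_mem h (γ j)) hx
    have key := (S.orderEmbOfFin h).lt_iff_lt (a := γ j) (b := j)
    have hfix := Fin.val_ne_of_ne (hγ j)
    rw [hrank _ hj, excAt_succ, placeOn_apply_of_notMem γ hx, ← hj, placeOn_apply_orderEmbOfFin,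
      Bool.not_eq_true', decide_eq_false_iff_not]
    rw [hj] at key
    simp only [Fin.lt_def] at hγj key ⊢
    omega
  · rw [placeOn_apply_of_notMem γ hx, placeOn_apply_of_notMem γ hy]
    simp [Fin.lt_def]

lemma maj_placeOn {γ : Equiv.Perm (Fin k)} (hγ : ∀ i, γ i ≠ i) {S : Finset (Fin n)}
    (h : #S = k) :
    maj (placeOn γ S) = patternMaj (excAt γ) (desAt γ) n (S.map Fin.valEmbedding) := by
  rcases n with _ | m
  · simp [maj, patternMaj]
  rw [maj, patternMaj, sum_range_succ, dif_neg (lt_irrefl _), add_zero, Nat.add_sub_cancel]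
  refine sum_congr rfl fun p hp => ?_
  have hp : p + 1 < m + 1 := by simpa using hp
  rw [dif_pos hp]
  exact if_congr (placeOn_descent_iff hγ h hp) rfl rfl

end Permutations

lemma sum_powersetCard_univ_map_valEmbedding {M : Type*} [AddCommMonoid M] (n k : ℕ)
    (f : Finset ℕ → M) :
    ∑ S ∈ (univ : Finset (Fin n)).powersetCard k, f (S.map Fin.valEmbedding) =
      ∑ T ∈ (range n).powersetCard k, f T := by
  rw [← Nat.Iio_eq_range, ← Fin.map_valEmbedding_univ, powersetCard_map, sum_map]
  rfl

open scoped Classical in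
lemma sum_dp_eq_sum_placeOn {M : Type*} [AddCommMonoid M] {n k : ℕ} {γ : Equiv.Perm (Fin k)}
    (hγ : ∀ i, γ i ≠ i) (f : Equiv.Perm (Fin n) → M) :
    ∑ σ ∈ univ.filter (fun σ : Equiv.Perm (Fin n) =>
        ∃ h : #(nonfixed σ) = k, (finCongr h).permCongr (dp σ) = γ), f σ =
      ∑ S ∈ (univ : Finset (Fin n)).powersetCard k, f (placeOn γ S) := by
  refine sum_nbij' nonfixed (placeOn γ) (fun σ hσ => ?_) (fun S hS => ?_)
    (fun σ hσ => eq_placeOn_nonfixed γ (mem_filter.1 hσ).2) (fun S hS => ?_)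
    (fun σ hσ => by rw [eq_placeOn_nonfixed γ (mem_filter.1 hσ).2])
  · exact mem_powersetCard.2 ⟨subset_univ _, (mem_filter.1 hσ).2.1⟩
  · have hS := (mem_powersetCard.1 hS).2
    exact mem_filter.2 ⟨mem_univ _, (exists_dp_eq_iff γ (nonfixed_placeOn hγ hS) hS).2
      (placeOn_apply_orderEmbOfFin γ hS)⟩
  · exact nonfixed_placeOn hγ (mem_powersetCard.1 hS).2

open scoped Classical in
/-- Wachs' lemma: for a derangement `γ ∈ D_k` and `n ≥ k`,
`∑_{σ ∈ S_n, dp σ = γ} q^{maj σ} = q^{maj γ} · [n choose k]_q`, as an identity in `ℚ(q)`. -/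
theorem stmt7 {k : ℕ} (γ : Equiv.Perm (Fin k)) (hγ : ∀ i, γ i ≠ i) (n : ℕ) (hn : k ≤ n) :
    ∑ σ ∈ Finset.univ.filter (fun σ : Equiv.Perm (Fin n) =>
        ∃ h : (nonfixed σ).card = k, (finCongr h).permCongr (dp σ) = γ),
      (RatFunc.X : RatFunc ℚ) ^ maj σ
      = RatFunc.X ^ maj γ * qBinom RatFunc.X n k := by
  have hmaj : ∀ S ∈ (univ : Finset (Fin n)).powersetCard k,
      (RatFunc.X : RatFunc ℚ) ^ maj (placeOn γ S) =
        RatFunc.X ^ patternMaj (excAt γ) (desAt γ) n (S.map Fin.valEmbedding) :=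
    fun S hS => by rw [maj_placeOn hγ (mem_powersetCard.1 hS).2]
  rw [sum_dp_eq_sum_placeOn hγ, sum_congr rfl hmaj,
    sum_powersetCard_univ_map_valEmbedding n k fun T => RatFunc.X ^ patternMaj _ _ n T,
    sum_powersetCard_patternMaj qInt_X_ne_zero (compatible_excAt_desAt hγ) hn,
    maj_eq_descentSum, qChoose_of_le hn]
end

section
/- For odd r with 1 \le r \le n, the Charney-Davis quantity of the rank-r uniform matroid Chow ring equals \sum_{k=0}^{(r-1)/2} \binom{n}{2k} E_{2k}; equivalently, 1 + \sum_{\mathbf{r}} (-1)^{|\mathbf{r}|} \prod_{i=1}^{|\mathbf{r}|} \binom{n - r_{i-1}}{r_i - r_{i-1}}, summed over all tuples 0 = r_0 < r_1 < \cdots < r_{|\mathbf{r}|} < r with all differences r_i - r_{i-1} even, equals \sum_{k=0}^{(r-1)/2} \binom{n}{2k} E_{2k}. -/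
/-- The previous value `r_{i-1}` of a tuple `0 = r_0 < r_1 < ⋯ < r_m` encoded by
`f : Fin m → Fin r` (so `r_i = f (i-1)` for `i ≥ 1`): `prevVal f i = 0` if `i = 0` and
`f (i-1)` otherwise. -/
def prevVal {m r : ℕ} (f : Fin m → Fin r) (i : Fin m) : ℕ :=
  if (i : ℕ) = 0 then 0
  else (f ⟨(i : ℕ) - 1, Nat.lt_of_le_of_lt (Nat.sub_le _ _) i.isLt⟩ : ℕ)

open scoped Classical in
/-- `1 + ∑_𝐫 (-1)^{|𝐫|} ∏_i C(n - r_{i-1}, r_i - r_{i-1})`, summed over all nonempty strictly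
increasing tuples `0 = r_0 < r_1 < ⋯ < r_m < r` with all consecutive differences even;
this is the Charney–Davis quantity of `A(U_{n,r})` obtained by substituting `t = -1` in the
Feichtner–Yuzvinsky formula. -/
noncomputable def cdLHS (n r : ℕ) : ℚ :=
  1 + ∑ m ∈ Finset.Icc 1 r, ∑ f ∈ Finset.univ.filter
      (fun f : Fin m → Fin r => StrictMono f ∧
        (∀ i, prevVal f i < (f i : ℕ)) ∧
        (∀ i, Even ((f i : ℕ) - prevVal f i))),
    (-1 : ℚ) ^ m * ∏ i, (((n - prevVal f i).choose ((f i : ℕ) - prevVal f i) : ℕ) : ℚ)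

/-!
Write `T(p)` for the signed sum over chains `p = r_0 < r_1 < ⋯ < r_m < r` with even steps of
`∏ C(n - r_{i-1}, r_i - r_{i-1})`, so that `cdLHS n r = T(0)`. Splitting off the first step gives
`T(p) = 1 - ∑_j C(n - p, j - p) T(j)`, summed over `p < j < r` with `j - p` even. The candidate
`S(p) = ∑_q C(n - p, q - p) E_{q-p}` (over `p ≤ q < r` with `q - p` even) satisfies the same
recursion: by `C(n-p, j-p) C(n-j, k-j) = C(n-p, k-p) C(k-p, j-p)` and an exchange of sums, the
inner sum becomes `∑_{0 < i ≤ K, i even} C(K, i) E_{K-i} = -E_K`, the coefficient of `x^K / K!`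
in `sech x · cosh x = 1`. Downward induction on `p` gives `T = S`.
-/

open Finset

namespace UniformChow

variable {m r : ℕ}

-- `prevVal` with `r_0 = p`; `prevFrom 0` unfolds to `prevVal`.
def prevFrom (p : ℕ) (f : Fin m → Fin r) (i : Fin m) : ℕ :=
  if (i : ℕ) = 0 then p
  else (f ⟨(i : ℕ) - 1, Nat.lt_of_le_of_lt (Nat.sub_le _ _) i.isLt⟩ : ℕ)

def IsEvenChain (p : ℕ) (f : Fin m → Fin r) : Prop :=
  ∀ i, prevFrom p f i < f i ∧ Even ((f i : ℕ) - prevFrom p f i)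

def chainWeight (n p : ℕ) (f : Fin m → Fin r) : ℚ :=
  (-1) ^ m * ∏ i, ((n - prevFrom p f i).choose ((f i : ℕ) - prevFrom p f i) : ℚ)

@[simp] lemma prevFrom_zero (p : ℕ) (f : Fin (m + 1) → Fin r) : prevFrom p f 0 = p := rfl

lemma prevFrom_succ (p : ℕ) (f : Fin (m + 1) → Fin r) (i : Fin m) :
    prevFrom p f i.succ = f i.castSucc := rfl

lemma prevFrom_cons_succ (p : ℕ) (j : Fin r) (g : Fin m → Fin r) (i : Fin m) :
    prevFrom p (Fin.cons j g : Fin (m + 1) → Fin r) i.succ = prevFrom j g i := by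
  obtain ⟨_ | k, _⟩ := i <;> rfl

lemma isEvenChain_cons {p : ℕ} {j : Fin r} {g : Fin m → Fin r} :
    IsEvenChain p (Fin.cons j g : Fin (m + 1) → Fin r) ↔
      (p < j ∧ Even ((j : ℕ) - p)) ∧ IsEvenChain j g := by
  simp only [IsEvenChain, Fin.forall_fin_succ, prevFrom_zero, prevFrom_cons_succ, Fin.cons_zero,
    Fin.cons_succ]

lemma chainWeight_cons (n p : ℕ) (j : Fin r) (g : Fin m → Fin r) :
    chainWeight n p (Fin.cons j g : Fin (m + 1) → Fin r) =
      -((n - p).choose (j - p) : ℚ) * chainWeight n j g := by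
  simp only [chainWeight, Fin.prod_univ_succ, prevFrom_zero, prevFrom_cons_succ, Fin.cons_zero,
    Fin.cons_succ]
  ring

lemma IsEvenChain.lt {p : ℕ} {f : Fin m → Fin r} (hf : IsEvenChain p f) (i : Fin m) :
    p + i < f i := by
  cases m with
  | zero => exact i.elim0
  | succ m =>
    induction i using Fin.induction with
    | zero => simpa using (hf 0).1
    | succ i hi =>
      have := (hf i.succ).1
      rw [prevFrom_succ] at this
      simp only [Fin.val_succ, Fin.val_castSucc] at hi ⊢
      omega

lemma IsEvenChain.strictMono {p : ℕ} {f : Fin m → Fin r} (hf : IsEvenChain p f) :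
    StrictMono f := by
  cases m with
  | zero => exact fun i => i.elim0
  | succ m => exact Fin.strictMono_iff_lt_succ.2 fun i => (hf i.succ).1

instance (p : ℕ) : DecidablePred (IsEvenChain (m := m) (r := r) p) :=
  fun _ => inferInstanceAs (Decidable (∀ _, _))

def chainSum (n r p m : ℕ) : ℚ :=
  ∑ f ∈ univ.filter (IsEvenChain (m := m) (r := r) p), chainWeight n p f

lemma chainSum_succ (n r p m : ℕ) :
    chainSum n r p (m + 1) = -∑ j ∈ (Ioo p r).filter (fun j => Even (j - p)),
      ((n - p).choose (j - p) : ℚ) * chainSum n r j m := by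
  rw [chainSum, sum_filter, ← (Fin.consEquiv fun _ => Fin r).sum_comp, Fintype.sum_prod_type]
  simp only [Fin.consEquiv, Equiv.coe_fn_mk, isEvenChain_cons, chainWeight_cons, ite_and]
  set g : ℕ → ℚ := fun j => if p < j then if Even (j - p) then
    -((n - p).choose (j - p) : ℚ) * chainSum n r j m else 0 else 0
  calc _ = ∑ j : Fin r, g j := by
        refine sum_congr rfl fun j _ => ?_
        simp only [g]
        split_ifs <;> simp [chainSum, sum_filter, mul_sum]
    _ = ∑ j ∈ range r, g j := Fin.sum_univ_eq_sum_range g r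
    _ = _ := by
        have hIoo : (range r).filter (p < ·) = Ioo p r := by ext; simp [and_comm]
        simp only [g, ← sum_filter, hIoo, ← sum_neg_distrib, neg_mul]

lemma chainSum_eq_zero {n r p m : ℕ} (hm : m ≠ 0) (h : r ≤ p + m) : chainSum n r p m = 0 := by
  refine sum_eq_zero fun f hf => absurd ((mem_filter.1 hf).2.lt ⟨m - 1, by omega⟩) ?_
  have := (f ⟨m - 1, by omega⟩).isLt
  rw [Fin.val_mk]
  omega

def chainTotal (n r p : ℕ) : ℚ := ∑ m ∈ range (r + 1), chainSum n r p m

lemma chainSum_zero (n r p : ℕ) : chainSum n r p 0 = 1 := by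
  rw [chainSum, filter_true_of_mem fun f _ i => i.elim0]
  simp [chainWeight]

lemma chainTotal_eq (n r p : ℕ) :
    chainTotal n r p = 1 - ∑ j ∈ (Ioo p r).filter (fun j => Even (j - p)),
      ((n - p).choose (j - p) : ℚ) * chainTotal n r j := by
  have htop : ∀ j ∈ (Ioo p r).filter (fun j => Even (j - p)),
      chainTotal n r j = ∑ m ∈ range r, chainSum n r j m := fun j hj => by
    rw [chainTotal, sum_range_succ, chainSum_eq_zero (by simp at hj; omega) (by omega), add_zero]
  rw [sum_congr rfl fun j hj => congrArg _ (htop j hj), chainTotal, sum_range_succ',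
    chainSum_zero]
  simp only [chainSum_succ, sum_neg_distrib, mul_sum]
  rw [sum_comm]
  ring

def IsSecantSeq (E : ℕ → ℚ) : Prop :=
  (PowerSeries.mk fun m => if m % 2 = 0 then E m / (m.factorial : ℚ) else 0) * coshS = 1

lemma choose_sub_mul_choose_sub {n p j k : ℕ} (hpj : p ≤ j) (hjk : j ≤ k) :
    (n - p).choose (j - p) * (n - j).choose (k - j) =
      (n - p).choose (k - p) * (k - p).choose (j - p) := by
  rw [Nat.choose_mul (Nat.sub_le_sub_right hjk p), Nat.sub_sub_sub_cancel_right hpj,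
    Nat.sub_sub_sub_cancel_right hpj]

def secantSum (E : ℕ → ℚ) (n r p : ℕ) : ℚ :=
  ∑ q ∈ (Ico p r).filter (fun q => Even (q - p)), ((n - p).choose (q - p) : ℚ) * E (q - p)

namespace IsSecantSeq

variable {E : ℕ → ℚ}

lemma zero (hE : IsSecantSeq E) : E 0 = 1 := by
  simpa [coshS] using congrArg PowerSeries.constantCoeff hE

lemma sum_choose_mul (hE : IsSecantSeq E) {K : ℕ} (hK : Even K) (hK0 : K ≠ 0) :
    ∑ i ∈ (range (K + 1)).filter Even, (K.choose i : ℚ) * E (K - i) = 0 := by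
  have h := congrArg (PowerSeries.coeff K) hE
  rw [mul_comm, PowerSeries.coeff_mul, Nat.sum_antidiagonal_eq_sum_range_succ_mk] at h
  simp only [PowerSeries.coeff_mk, coshS, PowerSeries.coeff_one, if_neg hK0] at h
  have hterm : ∀ i ∈ range K.succ, (if Even i then (K.choose i : ℚ) * E (K - i) else 0) =
      K.factorial * ((if i % 2 = 0 then (i.factorial : ℚ)⁻¹ else 0) *
        if (K - i) % 2 = 0 then E (K - i) / (K - i).factorial else 0) := fun i hi => by
    have hiK : i ≤ K := Nat.lt_succ_iff.1 (mem_range.1 hi)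
    by_cases hi : Even i
    · have hKi : Even (K - i) := (Nat.even_sub hiK).2 (iff_of_true hK hi)
      rw [if_pos hi, if_pos (Nat.even_iff.1 hi), if_pos (Nat.even_iff.1 hKi),
        Nat.cast_choose ℚ hiK]
      field_simp
    · rw [if_neg hi, if_neg (mt Nat.even_iff.2 hi), zero_mul, mul_zero]
  rw [sum_filter, sum_congr rfl hterm, ← mul_sum, h, mul_zero]

lemma sum_Ioc_choose_mul (hE : IsSecantSeq E) {p k : ℕ} (hpk : p < k) (hev : Even (k - p)) :
    ∑ j ∈ (Ioc p k).filter (fun j => Even (j - p)), ((k - p).choose (j - p) : ℚ) * E (k - j) =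
      -E (k - p) := by
  have hIcc : ∑ j ∈ (Icc p k).filter (fun j => Even (j - p)),
      ((k - p).choose (j - p) : ℚ) * E (k - j) = 0 := by
    rw [← hE.sum_choose_mul hev (by omega)]
    refine sum_nbij' (· - p) (· + p) ?_ ?_ ?_ ?_ ?_ <;> intro j hj <;>
      simp only [mem_filter, mem_Icc, mem_range, Nat.even_iff] at hj ⊢
    iterate 4 omega
    rw [Nat.sub_sub_sub_cancel_right hj.1.1]
  rw [← Ioc_insert_left hpk.le, filter_insert, if_pos (by simp), sum_insert (by simp)] at hIcc
  simp only [Nat.sub_self, Nat.choose_zero_right, Nat.cast_one, one_mul] at hIcc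
  linarith

lemma secantSum_eq (hE : IsSecantSeq E) (n : ℕ) {r p : ℕ} (hp : p < r) :
    secantSum E n r p = 1 - ∑ j ∈ (Ioo p r).filter (fun j => Even (j - p)),
      ((n - p).choose (j - p) : ℚ) * secantSum E n r j := by
  have hfirst : secantSum E n r p = 1 + ∑ k ∈ (Ioo p r).filter (fun k => Even (k - p)),
      ((n - p).choose (k - p) : ℚ) * E (k - p) := by
    rw [secantSum, ← Ioo_insert_left hp, filter_insert, if_pos (by simp), sum_insert (by simp)]
    simp [hE.zero]
  have hswap : ∑ j ∈ (Ioo p r).filter (fun j => Even (j - p)),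
      ((n - p).choose (j - p) : ℚ) * secantSum E n r j =
      -∑ k ∈ (Ioo p r).filter (fun k => Even (k - p)),
        ((n - p).choose (k - p) : ℚ) * E (k - p) := by
    simp only [secantSum, mul_sum]
    rw [sum_comm' (s' := fun k => (Ioc p k).filter fun j => Even (j - p))
      (t' := (Ioo p r).filter fun k => Even (k - p))
      fun j k => by simp only [mem_filter, mem_Ioo, mem_Ico, mem_Ioc, Nat.even_iff]; omega,
      ← sum_neg_distrib]
    refine sum_congr rfl fun k hk => ?_
    obtain ⟨hk, hev⟩ := mem_filter.1 hk
    rw [← mul_neg, ← hE.sum_Ioc_choose_mul (mem_Ioo.1 hk).1 hev, mul_sum]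
    refine sum_congr rfl fun j hj => ?_
    obtain ⟨hpj, hjk⟩ := mem_Ioc.1 (mem_filter.1 hj).1
    rw [← mul_assoc, ← mul_assoc, ← Nat.cast_mul, ← Nat.cast_mul,
      choose_sub_mul_choose_sub hpj.le hjk]
  rw [hswap, hfirst, sub_neg_eq_add]

lemma chainTotal_eq_secantSum (hE : IsSecantSeq E) (n : ℕ) {r p : ℕ}
    (hp : p < r) : chainTotal n r p = secantSum E n r p := by
  induction h : r - p using Nat.strong_induction_on generalizing p with
  | _ d ih =>
    rw [chainTotal_eq, hE.secantSum_eq n hp]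
    refine congrArg _ (sum_congr rfl fun j hj => ?_)
    obtain ⟨hpj, hjr⟩ := mem_Ioo.1 (mem_filter.1 hj).1
    rw [ih (r - j) (by omega) hjr rfl]

end IsSecantSeq

lemma cdLHS_eq_chainTotal (n r : ℕ) : cdLHS n r = chainTotal n r 0 := by
  rw [chainTotal, range_eq_Ico, sum_eq_sum_Ico_succ_bot (by omega : 0 < r + 1), chainSum_zero,
    zero_add, Ico_add_one_right_eq_Icc, cdLHS]
  refine congrArg _ (sum_congr rfl fun m _ => sum_congr (filter_congr fun f _ => ?_) fun _ _ => rfl)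
  exact ⟨fun ⟨_, hlt, hev⟩ i => ⟨hlt i, hev i⟩,
    fun hf => ⟨hf.strictMono, fun i => (hf i).1, fun i => (hf i).2⟩⟩

lemma sum_range_half_eq_sum_filter_even {M : Type*} [AddCommMonoid M] (f : ℕ → M) {r : ℕ}
    (hr : 1 ≤ r) :
    ∑ k ∈ range ((r - 1) / 2 + 1), f (2 * k) = ∑ q ∈ (range r).filter Even, f q := by
  refine sum_nbij' (2 * ·) (· / 2) ?_ ?_ ?_ ?_ ?_ <;> intro k hk <;>
    simp only [mem_filter, mem_range, Nat.even_iff] at hk ⊢ <;> omega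

end UniformChow

theorem stmt9_general (E : ℕ → ℚ)
    (hE : (PowerSeries.mk fun m => if m % 2 = 0 then E m / (m.factorial : ℚ) else 0) * coshS = 1)
    (n r : ℕ) (h1 : 1 ≤ r) :
    cdLHS n r = ∑ k ∈ Finset.range ((r - 1) / 2 + 1), (n.choose (2 * k) : ℚ) * E (2 * k) := by
  rw [UniformChow.cdLHS_eq_chainTotal, UniformChow.IsSecantSeq.chainTotal_eq_secantSum hE n h1,
    UniformChow.secantSum,
    UniformChow.sum_range_half_eq_sum_filter_even (fun q => (n.choose q : ℚ) * E q) h1]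
  simp [Nat.Ico_zero_eq_range]

/-- For odd `1 ≤ r ≤ n`, the Charney–Davis quantity of the Chow ring of the uniform matroid
`U_{n,r}` equals `∑_{k=0}^{(r-1)/2} C(n,2k) E_{2k}`, where the `E_{2k}` are the secant numbers
(defined by `(∑ E_{2k} x^{2k}/(2k)!) · cosh x = 1`). -/
theorem stmt9 (E : ℕ → ℚ)
    (hE : (PowerSeries.mk fun m => if m % 2 = 0 then E m / (m.factorial : ℚ) else 0) * coshS = 1)
    (n r : ℕ) (hodd : Odd r) (h1 : 1 ≤ r) (h2 : r ≤ n) :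
    cdLHS n r = ∑ k ∈ Finset.range ((r - 1) / 2 + 1), (n.choose (2 * k) : ℚ) * E (2 * k) :=
  stmt9_general E hE n r h1
end

section
/- The derangement sums D_{n,k} := #\{\sigma \in D_n : exc(\sigma) = n-k\} satisfy D_{n,k} = A(n, n-k) - \sum_{b\ge1} \binom{n}{n-b} D_{n-b, k-b}, where A(n,j) is the Eulerian number #\{\sigma \in S_n : exc(\sigma) = j\}. -/
/-!
Sort the permutations of `[n]` by their set `F` of fixed points. Deleting `F` and relabelling the
remaining points order-preservingly by `[n - |F|]` leaves a derangement with the same excedances,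
since a fixed point is never an excedance and an order isomorphism preserves `i < σ i`. Hence
`A(n, j) = ∑_b C(n, b) · #{derangements of [n - b] with j excedances}`. With `j = n - k`, the term
`b = 0` is `D_{n,k}`, the terms `b ≤ k` are `C(n, n - b) D_{n-b,k-b}`, and the terms `b > k` vanish
because a permutation of `[m]` has at most `m` excedances.
-/

/-- Number of excedances of a permutation of `Fin n`. -/
def exc {n : ℕ} (σ : Equiv.Perm (Fin n)) : ℕ :=
  (Finset.univ.filter fun i : Fin n => (i : ℕ) < (σ i : ℕ)).card

/-- `D_{m,k} = #{σ ∈ D_m : exc σ = m - k}` (the condition `exc σ = m - k` is read in `ℤ`,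
so `D_{m,k} = 0` when `k > m` makes the set empty). -/
def Dnum (m k : ℕ) : ℕ :=
  (Finset.univ.filter
    (fun σ : Equiv.Perm (Fin m) => (∀ j, σ j ≠ j) ∧ (exc σ : ℤ) = (m : ℤ) - k)).card

/-- The Eulerian number `A(n,j) = #{σ ∈ S_n : exc σ = j}` (with `j : ℤ`). -/
def Anum (n : ℕ) (j : ℤ) : ℕ :=
  (Finset.univ.filter (fun σ : Equiv.Perm (Fin n) => (exc σ : ℤ) = j)).card

open Finset

variable {α β : Type*} [Fintype α] [LinearOrder α] [Fintype β] [LinearOrder β]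

namespace Equiv.Perm

def numExcedances (σ : Perm α) : ℕ := #{a | a < σ a}

theorem numExcedances_permCongr (e : α ≃o β) (σ : Perm α) :
    (e.toEquiv.permCongr σ).numExcedances = σ.numExcedances := by
  refine (card_equiv e.toEquiv fun a => ?_).symm
  rw [mem_filter, mem_filter]
  simp

theorem numExcedances_ofSubtype {p : α → Prop} [DecidablePred p] (τ : Perm (Subtype p)) :
    (ofSubtype τ).numExcedances = τ.numExcedances := by
  symm
  refine card_nbij (fun x => (x : α)) ?_ (fun x _ y _ h => Subtype.ext h) ?_
  · intro x hx
    simpa using hx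
  · intro a ha
    simp only [coe_filter, mem_univ, true_and, Set.mem_ofPred_eq] at ha
    by_cases hp : p a
    · refine ⟨⟨a, hp⟩, ?_, rfl⟩
      simpa [ofSubtype_apply_of_mem _ hp, ← Subtype.coe_lt_coe] using ha
    · rw [ofSubtype_apply_of_not_mem _ hp] at ha
      exact absurd ha (lt_irrefl a)

theorem numExcedances_le_card (σ : Perm α) : σ.numExcedances ≤ Fintype.card α :=
  (card_filter_le _ _).trans_eq card_univ

end Equiv.Perm

open Equiv Perm

variable (α) in
def numDerangementsWithExc (j : ℤ) : ℕ :=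
  #{σ : Perm α | (∀ a, σ a ≠ a) ∧ (σ.numExcedances : ℤ) = j}

theorem numDerangementsWithExc_congr (e : α ≃o β) (j : ℤ) :
    numDerangementsWithExc α j = numDerangementsWithExc β j :=
  card_equiv e.toEquiv.permCongr fun σ => by
    rw [mem_filter, mem_filter, numExcedances_permCongr, ← e.toEquiv.forall_congr_right]
    simp [permCongr_apply]

theorem numDerangementsWithExc_eq_fin {m : ℕ} (h : Fintype.card α = m) (j : ℤ) :
    numDerangementsWithExc α j = numDerangementsWithExc (Fin m) j :=
  (numDerangementsWithExc_congr (Fintype.orderIsoFinOfCardEq α h) j).symm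

theorem numDerangementsWithExc_eq_zero (j : ℤ) (h : (Fintype.card α : ℤ) < j) :
    numDerangementsWithExc α j = 0 := by
  refine card_eq_zero.2 (filter_eq_empty_iff.2 fun σ _ ⟨_, hσ⟩ => ?_)
  have := σ.numExcedances_le_card
  omega

theorem card_numExcedances_fixedPoints_eq (j : ℤ) (s : Finset α) :
    #{σ : Perm α | (σ.numExcedances : ℤ) = j ∧ ({a | σ a = a} : Finset α) = s} =
      numDerangementsWithExc {a // a ∉ s} j := by
  symm
  refine card_nbij (fun τ => ofSubtype τ) ?_ (fun τ _ τ' _ h => ofSubtype_injective h) ?_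
  · intro τ hτ
    obtain ⟨hτ, hexc⟩ := (mem_filter.1 hτ).2
    refine mem_filter.2 ⟨mem_univ _, by rwa [numExcedances_ofSubtype], ?_⟩
    ext a
    by_cases ha : a ∈ s
    · simp [ha, ofSubtype_apply_of_not_mem τ (not_not.2 ha)]
    · simpa [ha, ofSubtype_apply_of_mem τ ha, Subtype.ext_iff] using hτ ⟨a, ha⟩
  · intro σ hσ
    obtain ⟨hexc, hfix⟩ := mem_filter.1 hσ |>.2
    have hmem : ∀ a, σ a = a ↔ a ∈ s := fun a => by rw [← hfix, mem_filter]; simp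
    have hinv : ∀ a, σ a ∉ s ↔ a ∉ s := fun a => by
      rw [← hmem, ← hmem, σ.injective.eq_iff]
    have hσ' : ofSubtype (σ.subtypePerm hinv) = σ :=
      ofSubtype_subtypePerm _ fun a h => mt (hmem a).2 h
    refine ⟨σ.subtypePerm hinv, mem_filter.2 ⟨mem_univ _, fun a h => ?_, ?_⟩, hσ'⟩
    · exact a.2 ((hmem a).1 (congrArg Subtype.val h))
    · rwa [← numExcedances_ofSubtype, hσ']

theorem card_numExcedances_eq_sum_choose_mul (j : ℤ) :
    #{σ : Perm α | (σ.numExcedances : ℤ) = j} =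
      ∑ b ∈ range (Fintype.card α + 1),
        (Fintype.card α).choose b * numDerangementsWithExc (Fin (Fintype.card α - b)) j := by
  rw [card_eq_sum_card_fiberwise (f := fun σ : Perm α => ({a | σ a = a} : Finset α)) (t := univ)
    fun _ _ => mem_univ _]
  simp_rw [filter_filter, card_numExcedances_fixedPoints_eq]
  rw [sum_congr rfl fun s _ =>
    numDerangementsWithExc_eq_fin (α := {a // a ∉ s}) (m := Fintype.card α - #s) (by simp) j]
  rw [← powerset_univ,
    sum_powerset_apply_card fun b => numDerangementsWithExc (Fin (Fintype.card α - b)) j, card_univ]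
  simp only [smul_eq_mul]

theorem Dnum_eq_numDerangementsWithExc (m k : ℕ) :
    Dnum m k = numDerangementsWithExc (Fin m) (m - k) := by
  unfold Dnum numDerangementsWithExc
  -- the two filters differ only in the `Decidable` instance chosen for `∀ j, σ j ≠ j`
  congr!

theorem Anum_eq_card (n : ℕ) (j : ℤ) :
    Anum n j = #{σ : Perm (Fin n) | (σ.numExcedances : ℤ) = j} := rfl

theorem Anum_eq_sum_choose_mul (n k : ℕ) :
    Anum n (n - k) = Dnum n k + ∑ b ∈ Icc 1 (min n k), n.choose (n - b) * Dnum (n - b) (k - b) := by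
  have hterm : ∀ b ∈ Icc 1 n, n.choose b * numDerangementsWithExc (Fin (n - b)) (n - k) =
      if b ≤ k then n.choose (n - b) * Dnum (n - b) (k - b) else 0 := by
    intro b hb
    have hbn : b ≤ n := (mem_Icc.1 hb).2
    split_ifs with hbk
    · rw [Nat.choose_symm hbn, Dnum_eq_numDerangementsWithExc]
      congr 2
      omega
    · rw [numDerangementsWithExc_eq_zero _ (by rw [Fintype.card_fin]; omega), mul_zero]
  rw [Anum_eq_card, card_numExcedances_eq_sum_choose_mul, Fintype.card_fin,
    sum_range_eq_add_Ico _ (by omega : 0 < n + 1), Ico_add_one_right_eq_Icc, sum_congr rfl hterm,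
    ← sum_filter, Nat.choose_zero_right, one_mul, Nat.sub_zero, ← Dnum_eq_numDerangementsWithExc]
  congr 2
  ext b
  simp only [mem_filter, mem_Icc, le_min_iff]
  omega

/-- `D_{n,k} = A(n, n-k) - ∑_{b=1}^{min(n,k)} C(n, n-b) D_{n-b, k-b}`. -/
theorem stmt17 (n k : ℕ) :
    (Dnum n k : ℤ) = (Anum n ((n : ℤ) - k) : ℤ) -
      ∑ b ∈ Finset.Icc 1 (min n k), ((n.choose (n - b)) : ℤ) * (Dnum (n - b) (k - b) : ℤ) := by
  rw [Anum_eq_sum_choose_mul]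
  push_cast
  ring
end
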